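/- Under the setting of the projected differential Riccati equation (A, S ∈ ℝ^{n×n} with S symmetric positive semidefinite, X₀ = Z Zᵀ, Q = C Cᵀ, V_k with orthonormal columns, H_k = V_kᵀ A V_k, S_k = V_kᵀ S V_k, Y_k the solution of Ẏ_k = H_k Y_k + Y_k H_kᵀ + (V_kᵀC)(V_kᵀC)ᵀ − Y_k S_k Y_k with Y_k(0) = (V_kᵀZ)(V_kᵀZ)ᵀ, and X_k(t) = V_k Y_k(t) V_kᵀ), the numerical solution satisfies max_{s ∈ [0,t]} ‖X_k(s)‖ ≤ max{1, e^{2tμ(A)}} ‖X₀‖ + t max{1, φ₁(2tμ(A))} ‖Q‖. -/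

import Mathlib

/-!
The compressed solution `Y` stays symmetric, by uniqueness for the Riccati equation, and positive
semidefinite: at the first time a slightly shifted `Y t + δ` acquires a kernel vector `x`, the
term `-Y S Y` is only quadratic in `δ`, so `xᵀ Ẏ x` cannot push the form below zero. Hence `‖Y s‖`
is the largest value of `uᵀ (Y s) u` on unit vectors. Conjugating by `E r = exp ((s - r) H)`
removes the linear terms, `d/dr (E Y Eᵀ) = E (Q - Y S Y) Eᵀ ≤ E Q Eᵀ`, and
`‖exp (τ H)‖ ≤ e^{μ τ}` with `μ = μ(A)` because the field of values of `H = Vᵀ A V` lies in that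
of `A`. Integrating over `[0, s]` gives `uᵀ (Y s) u ≤ (e^{2μs} ‖Y 0‖ + s φ₁(2μs) ‖Q‖) ‖u‖²`,
and `s φ₁(2μs) = ∫₀ˢ e^{2μr} dr` increases with `s`.
-/

open Matrix
open scoped Matrix.Norms.L2Operator

noncomputable section

/-- The logarithmic norm `μ(A)`: the maximum of the real parts of the field of values
`F(A) = {x* A x : ‖x‖ = 1}` of `A`, viewed as a complex matrix. -/
def logNorm {n : ℕ} (A : Matrix (Fin n) (Fin n) ℝ) : ℝ :=
  sSup {r : ℝ | ∃ x : EuclideanSpace ℂ (Fin n), ‖x‖ = 1 ∧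
    r = (dotProduct (star (x : Fin n → ℂ)) ((A.map Complex.ofReal).mulVec x)).re}

/-- The function `φ₁(z) = (e^z - 1)/z = ∑_{ℓ≥0} z^ℓ/(ℓ+1)!`. -/
def phi1 (z : ℝ) : ℝ := ∑' k : ℕ, z ^ k / (Nat.factorial (k + 1) : ℝ)

/-- Matrix exponential. -/
def mexp {n : ℕ} (A : Matrix (Fin n) (Fin n) ℝ) : Matrix (Fin n) (Fin n) ℝ :=
  NormedSpace.exp A

/-- The block Krylov subspace `K_k(A,B) = span{B, AB, …, A^{k-1}B}` (the span of
the columns of the matrices `A^i B`, `i < k`). -/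
def blockKrylov {n : ℕ} {ι : Type*} (A : Matrix (Fin n) (Fin n) ℝ) (B : Matrix (Fin n) ι ℝ)
    (k : ℕ) : Submodule ℝ (Fin n → ℝ) :=
  Submodule.span ℝ {v | ∃ i < k, ∃ j, v = ((A ^ i * B)ᵀ) j}

/-- The column space of a matrix. -/
def colSpace {n m : ℕ} (V : Matrix (Fin n) (Fin m) ℝ) : Submodule ℝ (Fin n → ℝ) :=
  Submodule.span ℝ (Set.range Vᵀ)

open Set
open scoped Topology

lemma norm_toLp_sq {ι : Type*} [Fintype ι] (u : ι → ℝ) : ‖WithLp.toLp 2 u‖ ^ 2 = u ⬝ᵥ u := by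
  rw [← real_inner_self_eq_norm_sq]; rfl

lemma norm_toLp_ofReal {ι : Type*} [Fintype ι] (v : ι → ℝ) :
    ‖(WithLp.toLp 2 fun i => (v i : ℂ) : EuclideanSpace ℂ ι)‖ = ‖WithLp.toLp 2 v‖ := by
  simp [EuclideanSpace.norm_eq]

namespace Matrix

variable {ι : Type*} [Fintype ι]

lemma re_star_dotProduct_map_ofReal_mulVec (A : Matrix ι ι ℝ) (v : ι → ℝ) :
    (star (fun i => (v i : ℂ)) ⬝ᵥ A.map Complex.ofReal *ᵥ fun i => (v i : ℂ)).re
      = v ⬝ᵥ A *ᵥ v := by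
  simp [dotProduct, mulVec, Complex.re_sum]

lemma dotProduct_self_pos_of_mem_sphere {x : ι → ℝ} (hx : x ∈ Metric.sphere 0 1) :
    0 < x ⬝ᵥ x := by
  simpa using dotProduct_self_star_pos_iff.mpr (ne_zero_of_mem_sphere one_ne_zero ⟨x, hx⟩)

lemma dotProduct_transpose_mul_mul_mulVec {κ : Type*} [Fintype κ] (B : Matrix ι κ ℝ)
    (M : Matrix ι ι ℝ) (u : κ → ℝ) : u ⬝ᵥ (Bᵀ * M * B) *ᵥ u = B *ᵥ u ⬝ᵥ M *ᵥ (B *ᵥ u) := by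
  rw [← mulVec_mulVec, ← mulVec_mulVec, dotProduct_mulVec u, vecMul_transpose]

lemma dotProduct_transpose_mul_self_mulVec {κ : Type*} [Fintype κ] (B : Matrix ι κ ℝ)
    (u : κ → ℝ) : u ⬝ᵥ (Bᵀ * B) *ᵥ u = B *ᵥ u ⬝ᵥ B *ᵥ u := by
  rw [← mulVec_mulVec, dotProduct_mulVec u, vecMul_transpose]

lemma PosSemidef.dotProduct_mulVec_nonneg_real {M : Matrix ι ι ℝ} (hM : M.PosSemidef)
    (u : ι → ℝ) : 0 ≤ u ⬝ᵥ M *ᵥ u := by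
  simpa using hM.dotProduct_mulVec_nonneg u

lemma posSemidef_of_forall_sphere {M : Matrix ι ι ℝ} (hM : M.IsSymm)
    (h : ∀ x ∈ Metric.sphere (0 : ι → ℝ) 1, 0 ≤ x ⬝ᵥ M *ᵥ x) : M.PosSemidef := by
  refine .of_dotProduct_mulVec_nonneg (isHermitian_iff_isSymm.mpr hM) fun x => ?_
  rcases eq_or_ne x 0 with rfl | hx
  · simp
  have hx' : ‖x‖ ≠ 0 := norm_ne_zero_iff.mpr hx
  have := h (‖x‖⁻¹ • x) (by simp [norm_smul, hx'])
  rw [mulVec_smul, dotProduct_smul, smul_dotProduct, smul_smul, smul_eq_mul] at this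
  simpa using nonneg_of_mul_nonneg_right this (by positivity)

variable [DecidableEq ι]

lemma dotProduct_add_smul_one_mulVec (M : Matrix ι ι ℝ) (a : ℝ) (x : ι → ℝ) :
    x ⬝ᵥ (M + a • 1) *ᵥ x = x ⬝ᵥ M *ᵥ x + a * (x ⬝ᵥ x) := by
  simp [add_mulVec, smul_mulVec, dotProduct_add]

lemma mulVec_eq_neg_smul_of_posSemidef_add {M : Matrix ι ι ℝ} {a : ℝ}
    (hM : (M + a • 1).PosSemidef) {x : ι → ℝ} (hx : x ⬝ᵥ M *ᵥ x + a * (x ⬝ᵥ x) ≤ 0) :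
    M *ᵥ x = -a • x := by
  rw [← dotProduct_add_smul_one_mulVec] at hx
  have := (hM.dotProduct_mulVec_zero_iff x).mp
    (by simpa using le_antisymm hx (hM.dotProduct_mulVec_nonneg_real x))
  simpa [add_mulVec, smul_mulVec, add_eq_zero_iff_eq_neg] using this

lemma dotProduct_mulVec_le_l2_opNorm (M : Matrix ι ι ℝ) (u : ι → ℝ) :
    u ⬝ᵥ M *ᵥ u ≤ ‖M‖ * (u ⬝ᵥ u) := by
  set x := WithLp.toLp 2 u
  calc u ⬝ᵥ M *ᵥ u = inner ℝ x (toEuclideanCLM (𝕜 := ℝ) M x) := (inner_toEuclideanCLM M x x).symm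
    _ ≤ ‖x‖ * (‖M‖ * ‖x‖) :=
      (real_inner_le_norm _ _).trans (by gcongr; exact (toEuclideanCLM (𝕜 := ℝ) M).le_opNorm _)
    _ = ‖M‖ * (u ⬝ᵥ u) := by rw [← norm_toLp_sq]; ring

lemma l2_opNorm_le_of_mulVec_dotProduct_le {M : Matrix ι ι ℝ} {c : ℝ} (hc : 0 ≤ c)
    (h : ∀ u, M *ᵥ u ⬝ᵥ M *ᵥ u ≤ c ^ 2 * (u ⬝ᵥ u)) : ‖M‖ ≤ c := by
  refine ContinuousLinearMap.opNorm_le_bound (toEuclideanCLM (𝕜 := ℝ) M) hc fun x => ?_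
  rw [← sq_le_sq₀ (norm_nonneg _) (by positivity), mul_pow]
  obtain ⟨u, rfl⟩ : ∃ u, WithLp.toLp 2 u = x := ⟨x.ofLp, rfl⟩
  simpa [norm_toLp_sq] using h u

open scoped MatrixOrder in
lemma PosSemidef.l2_opNorm_le {M : Matrix ι ι ℝ} (hM : M.PosSemidef) {c : ℝ} (hc : 0 ≤ c)
    (h : ∀ u, u ⬝ᵥ M *ᵥ u ≤ c * (u ⬝ᵥ u)) : ‖M‖ ≤ c := by
  obtain ⟨B, rfl⟩ := CStarAlgebra.nonneg_iff_eq_star_mul_self.mp hM.nonneg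
  have hB : ‖B‖ ≤ √c := l2_opNorm_le_of_mulVec_dotProduct_le (Real.sqrt_nonneg c) fun u => by
    rw [Real.sq_sqrt hc]
    simpa [star_eq_conjTranspose, dotProduct_transpose_mul_self_mulVec] using h u
  calc ‖star B * B‖ = ‖B‖ * ‖B‖ := l2_opNorm_conjTranspose_mul_self B
    _ ≤ √c * √c := by gcongr
    _ = c := Real.mul_self_sqrt hc

lemma l2_opNorm_transpose {κ : Type*} [Fintype κ] [DecidableEq κ] (B : Matrix ι κ ℝ) :
    ‖Bᵀ‖ = ‖B‖ := by
  rw [← conjTranspose_eq_transpose_of_trivial, l2_opNorm_conjTranspose]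

omit [DecidableEq ι] in
lemma l2_opNorm_le_one_of_transpose_mul_self {κ : Type*} [Fintype κ] [DecidableEq κ]
    {V : Matrix ι κ ℝ} (hV : Vᵀ * V = 1) : ‖V‖ ≤ 1 := by
  have h1 : ‖(1 : Matrix κ κ ℝ)‖ ≤ 1 := by
    rw [cstar_norm_def, map_one]; exact ContinuousLinearMap.norm_id_le
  have := l2_opNorm_conjTranspose_mul_self V
  rw [conjTranspose_eq_transpose_of_trivial, hV] at this
  nlinarith [norm_nonneg V]

lemma l2_opNorm_mul_mul_transpose_le {κ : Type*} [Fintype κ] [DecidableEq κ]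
    {B : Matrix ι κ ℝ} (hB : ‖B‖ ≤ 1) (M : Matrix κ κ ℝ) : ‖B * M * Bᵀ‖ ≤ ‖M‖ :=
  calc ‖B * M * Bᵀ‖ ≤ ‖B‖ * ‖M‖ * ‖B‖ := by
        grw [l2_opNorm_mul, l2_opNorm_mul, l2_opNorm_transpose]
    _ ≤ 1 * ‖M‖ * 1 := by gcongr
    _ = ‖M‖ := by ring

end Matrix

lemma bddAbove_fieldOfValues_re {n : ℕ} (A : Matrix (Fin n) (Fin n) ℝ) :
    BddAbove {r : ℝ | ∃ x : EuclideanSpace ℂ (Fin n), ‖x‖ = 1 ∧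
      r = (dotProduct (star (x : Fin n → ℂ)) ((A.map Complex.ofReal).mulVec x)).re} := by
  refine ⟨‖A.map Complex.ofReal‖, ?_⟩
  rintro r ⟨x, hx, rfl⟩
  set T := toEuclideanCLM (𝕜 := ℂ) (A.map Complex.ofReal)
  have h : star x.ofLp ⬝ᵥ A.map Complex.ofReal *ᵥ x.ofLp = inner ℂ x (T x) := by
    rw [EuclideanSpace.inner_eq_star_dotProduct, dotProduct_comm]; rfl
  calc _ ≤ ‖star x.ofLp ⬝ᵥ A.map Complex.ofReal *ᵥ x.ofLp‖ := Complex.re_le_norm _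
    _ ≤ ‖x‖ * (‖T‖ * ‖x‖) := h ▸ (norm_inner_le_norm _ _).trans (by gcongr; exact T.le_opNorm x)
    _ = ‖A.map Complex.ofReal‖ := by rw [hx]; simp [T, cstar_norm_def]

lemma dotProduct_mulVec_le_logNorm {n : ℕ} (A : Matrix (Fin n) (Fin n) ℝ) (w : Fin n → ℝ) :
    w ⬝ᵥ A *ᵥ w ≤ logNorm A * (w ⬝ᵥ w) := by
  rcases eq_or_ne w 0 with rfl | hw
  · simp
  set c := ‖WithLp.toLp 2 w‖
  have hc : c ≠ 0 := norm_ne_zero_iff.mpr (by simpa using hw)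
  have hunit : (c⁻¹ • w) ⬝ᵥ A *ᵥ (c⁻¹ • w) ≤ logNorm A := by
    refine le_csSup (bddAbove_fieldOfValues_re A) ⟨WithLp.toLp 2 fun i => ((c⁻¹ • w) i : ℂ), ?_,
      (re_star_dotProduct_map_ofReal_mulVec A _).symm⟩
    rw [norm_toLp_ofReal, WithLp.toLp_smul, norm_smul, norm_inv, norm_norm, inv_mul_cancel₀ hc]
  rw [mulVec_smul, dotProduct_smul, smul_dotProduct, smul_smul, smul_eq_mul] at hunit
  calc w ⬝ᵥ A *ᵥ w = c ^ 2 * (c⁻¹ * c⁻¹ * (w ⬝ᵥ A *ᵥ w)) := by field_simp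
    _ ≤ logNorm A * (w ⬝ᵥ w) := by rw [← norm_toLp_sq, mul_comm (logNorm A)]; gcongr

lemma dotProduct_compress_mulVec_le_logNorm {n m : ℕ} (A : Matrix (Fin n) (Fin n) ℝ)
    {V : Matrix (Fin n) (Fin m) ℝ} (hV : Vᵀ * V = 1) (u : Fin m → ℝ) :
    u ⬝ᵥ (Vᵀ * A * V) *ᵥ u ≤ logNorm A * (u ⬝ᵥ u) := by
  have hu : u ⬝ᵥ u = V *ᵥ u ⬝ᵥ V *ᵥ u := by
    simpa [hV] using dotProduct_transpose_mul_self_mulVec V u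
  rw [dotProduct_transpose_mul_mul_mulVec, hu]
  exact dotProduct_mulVec_le_logNorm A _

lemma mul_phi1 (z : ℝ) : z * phi1 z = Real.exp z - 1 := by
  have h := NormedSpace.expSeries_div_hasSum_exp z
  rw [← Real.exp_eq_exp_ℝ, ← hasSum_nat_add_iff' 1] at h
  rcases eq_or_ne z 0 with rfl | hz
  · simp
  have h' := h.div_const z
  simp only [Finset.range_one, Finset.sum_singleton, pow_zero, Nat.factorial_zero, Nat.cast_one,
    div_one] at h'
  rw [phi1, (h'.congr_fun fun k => by field_simp; ring).tsum_eq]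
  field_simp

lemma phi1_zero : phi1 0 = 1 := by
  rw [phi1, tsum_eq_single 0 fun k hk => by simp [hk]]
  simp

lemma hasDerivAt_mul_phi1_mul (c s : ℝ) :
    HasDerivAt (fun s => s * phi1 (c * s)) (Real.exp (c * s)) s := by
  rcases eq_or_ne c 0 with rfl | hc
  · simpa [phi1_zero] using hasDerivAt_id' s
  have h := (((hasDerivAt_id' s).const_mul c).exp.sub_const 1).div_const c
  rw [mul_one, mul_div_cancel_right₀ _ hc] at h
  refine h.congr_of_eventuallyEq (.of_forall fun s => ?_)
  rw [eq_div_iff hc, mul_comm, ← mul_assoc, mul_comm c, mul_phi1]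

lemma mul_phi1_mul_le {c s t : ℝ} (hst : s ≤ t) : s * phi1 (c * s) ≤ t * phi1 (c * t) :=
  monotone_of_hasDerivAt_nonneg (hasDerivAt_mul_phi1_mul c) (fun _ => (Real.exp_pos _).le) hst

lemma hasDerivAt_exp_sub_smul {𝔸 : Type*} [NormedRing 𝔸] [NormedAlgebra ℝ 𝔸] [CompleteSpace 𝔸]
    (M : 𝔸) (s r : ℝ) :
    HasDerivAt (fun r : ℝ => NormedSpace.exp ((s - r) • M))
      (-(NormedSpace.exp ((s - r) • M) * M)) r := by
  have h := (hasDerivAt_exp_smul_const M (s - r)).scomp r ((hasDerivAt_id' r).const_sub s)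
  rwa [neg_one_smul] at h

lemma exists_first_nonpos {X : Type*} [TopologicalSpace X] {K : Set X} (hK : IsCompact K)
    {f : ℝ → X → ℝ} {a b : ℝ} (hf : ContinuousOn (fun p : ℝ × X => f p.1 p.2) (Icc a b ×ˢ K))
    (h : ∃ t ∈ Icc a b, ∃ x ∈ K, f t x ≤ 0) :
    ∃ t ∈ Icc a b, ∃ x ∈ K, f t x ≤ 0 ∧ ∀ r ∈ Ico a t, ∀ y ∈ K, 0 < f r y := by
  obtain ⟨t, ht, x, hx, hfx⟩ := h
  obtain ⟨⟨t₀, x₀⟩, ⟨⟨ht₀, hx₀⟩, hf₀⟩, hmin⟩ :=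
    (hf.lowerSemicontinuousOn.isCompact_inter_preimage_Iic (isCompact_Icc.prod hK) 0).exists_isMinOn
      ⟨(t, x), ⟨ht, hx⟩, hfx⟩ continuous_fst.continuousOn
  refine ⟨t₀, ht₀, x₀, hx₀, hf₀, fun r hr y hy => lt_of_not_ge fun hry => ?_⟩
  have : t₀ ≤ r := hmin (a := (r, y)) ⟨⟨⟨hr.1, hr.2.le.trans ht₀.2⟩, hy⟩, hry⟩
  exact absurd hr.2 this.not_gt

lemma ContinuousWithinAt.nonneg_of_pos_left {g : ℝ → ℝ} {a t : ℝ}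
    (hg : ContinuousWithinAt g (Iio t) t) (hat : a < t) (hpos : ∀ r ∈ Ioo a t, 0 < g r) : 0 ≤ g t :=
  ge_of_tendsto hg (Filter.mem_of_superset (Ioo_mem_nhdsLT hat) fun r hr => (hpos r hr).le)

lemma HasDerivAt.nonpos_of_pos_left {g : ℝ → ℝ} {g' a t : ℝ} (hg : HasDerivAt g g' t)
    (hat : a < t) (hpos : ∀ r ∈ Ioo a t, 0 < g r) (ht : g t ≤ 0) : g' ≤ 0 := by
  refine le_of_tendsto ((hasDerivAt_iff_tendsto_slope.mp hg).mono_left (nhdsLT_le_nhdsNE t)) ?_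
  filter_upwards [Ioo_mem_nhdsLT hat] with r hr
  rw [slope_def_field]
  exact div_nonpos_of_nonneg_of_nonpos (by linarith [hpos r hr]) (by linarith [hr.2])

namespace Matrix

variable {ι : Type*} [Fintype ι] [DecidableEq ι]

omit [DecidableEq ι] in
lemma continuousOn_dotProduct_mulVec_self {Y : ℝ → Matrix ι ι ℝ} {s : Set ℝ}
    (hY : ContinuousOn Y s) (K : Set (ι → ℝ)) :
    ContinuousOn (fun p : ℝ × (ι → ℝ) => p.2 ⬝ᵥ Y p.1 *ᵥ p.2) (s ×ˢ K) :=
  (continuous_snd.dotProduct (continuous_fst.matrix_mulVec continuous_snd)).comp_continuousOn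
    ((hY.comp continuousOn_fst fun _ hp => hp.1).prodMk continuousOn_snd)

lemma hasDerivAt_dotProduct_mulVec {P : ℝ → Matrix ι ι ℝ} {P' : Matrix ι ι ℝ} {t : ℝ}
    (hP : HasDerivAt P P' t) (u : ι → ℝ) :
    HasDerivAt (fun r => u ⬝ᵥ P r *ᵥ u) (u ⬝ᵥ P' *ᵥ u) t := by
  let L : Matrix ι ι ℝ →ₗ[ℝ] ℝ :=
    { toFun := fun M => u ⬝ᵥ M *ᵥ u
      map_add' := fun M N => by simp [add_mulVec, dotProduct_add]
      map_smul' := fun c M => by simp [smul_mulVec] }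
  exact (LinearMap.toContinuousLinearMap L).hasFDerivAt.comp_hasDerivAt t hP

lemma hasDerivAt_transpose {P : ℝ → Matrix ι ι ℝ} {P' : Matrix ι ι ℝ} {t : ℝ}
    (hP : HasDerivAt P P' t) : HasDerivAt (fun r => (P r)ᵀ) P'ᵀ t :=
  (LinearMap.toContinuousLinearMap
    (transposeLinearEquiv ι ι ℝ ℝ).toLinearMap).hasFDerivAt.comp_hasDerivAt t hP

lemma norm_exp_smul_le {M : Matrix ι ι ℝ} {c : ℝ} (hM : ∀ u, u ⬝ᵥ M *ᵥ u ≤ c * (u ⬝ᵥ u))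
    {τ : ℝ} (hτ : 0 ≤ τ) : ‖NormedSpace.exp (τ • M)‖ ≤ Real.exp (c * τ) := by
  refine l2_opNorm_le_of_mulVec_dotProduct_le (Real.exp_pos _).le fun u => ?_
  set E := fun r : ℝ => NormedSpace.exp (r • M)
  have hET : ∀ r, NormedSpace.exp (r • Mᵀ) = (E r)ᵀ := fun r => by
    rw [← exp_transpose, transpose_smul]
  have hE : ∀ r, u ⬝ᵥ (NormedSpace.exp (r • Mᵀ) * E r) *ᵥ u = E r *ᵥ u ⬝ᵥ E r *ᵥ u := fun r => by
    rw [hET, dotProduct_transpose_mul_self_mulVec]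
  have hderiv : ∀ r, HasDerivAt (fun r => u ⬝ᵥ (NormedSpace.exp (r • Mᵀ) * E r) *ᵥ u)
      (2 * (E r *ᵥ u ⬝ᵥ M *ᵥ (E r *ᵥ u))) r := fun r => by
    convert hasDerivAt_dotProduct_mulVec
      ((hasDerivAt_exp_smul_const Mᵀ r).fun_mul (hasDerivAt_exp_smul_const' M r)) u using 1
    rw [hET, ← mul_assoc (E r)ᵀ M, add_mulVec, dotProduct_add,
      dotProduct_transpose_mul_mul_mulVec, dotProduct_transpose_mul_mul_mulVec,
      dotProduct_transpose_mulVec]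
    ring
  have key := le_gronwallBound_of_liminf_deriv_right_le (a := 0) (b := τ) (ε := 0) (δ := u ⬝ᵥ u)
    (K := 2 * c) (fun r _ => (hderiv r).continuousAt.continuousWithinAt)
    (fun r _ _ hr => (hderiv r).hasDerivWithinAt.liminf_right_slope_le hr)
    (by simp [E]) (fun r _ => by rw [hE]; linarith [hM (E r *ᵥ u)]) τ ⟨hτ, le_rfl⟩
  rw [gronwallBound_ε0, sub_zero, hE] at key
  calc _ ≤ u ⬝ᵥ u * Real.exp (2 * c * τ) := key
    _ = Real.exp (c * τ) ^ 2 * (u ⬝ᵥ u) := by rw [← Real.exp_nat_mul]; ring_nf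

lemma dotProduct_exp_smul_conj_mulVec_le {H : Matrix ι ι ℝ} {μ τ : ℝ}
    (hH : ∀ u, u ⬝ᵥ H *ᵥ u ≤ μ * (u ⬝ᵥ u)) (hτ : 0 ≤ τ) (M : Matrix ι ι ℝ) (u : ι → ℝ) :
    u ⬝ᵥ (NormedSpace.exp (τ • H) * M * (NormedSpace.exp (τ • H))ᵀ) *ᵥ u
      ≤ Real.exp (2 * μ * τ) * ‖M‖ * (u ⬝ᵥ u) := by
  refine (dotProduct_mulVec_le_l2_opNorm _ u).trans
    (mul_le_mul_of_nonneg_right ?_ (dotProduct_self_star_nonneg u))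
  have hE := norm_exp_smul_le hH hτ
  calc _ ≤ ‖NormedSpace.exp (τ • H)‖ * ‖M‖ * ‖NormedSpace.exp (τ • H)‖ := by
        grw [l2_opNorm_mul, l2_opNorm_mul, l2_opNorm_transpose]
    _ ≤ Real.exp (μ * τ) * ‖M‖ * Real.exp (μ * τ) := by gcongr
    _ = Real.exp (2 * μ * τ) * ‖M‖ := by rw [mul_right_comm, ← Real.exp_add]; ring_nf

section PosSemidefInvariance

variable {Y D : ℝ → Matrix ι ι ℝ} {T K : ℝ}

/-- At the first time `t` at which `x ↦ xᵀ (Y t + ε e^{(K+1)t}) x` vanishes on the unit sphere,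
a minimiser `x` is an eigenvector of `Y t` for `-a = -ε e^{(K+1)t}`, so by `hD` the form is
strictly increasing in `t` at `x`, contradicting that it was positive just before. -/
lemma dotProduct_mulVec_add_pos_of_hasDerivAt (hK : 0 ≤ K)
    (hY : ∀ t ∈ Icc 0 T, HasDerivAt Y (D t) t) (hsymm : ∀ t ∈ Icc 0 T, (Y t).IsSymm)
    (h0 : (Y 0).PosSemidef)
    (hD : ∀ t ∈ Icc 0 T, ∀ a, 0 < a → a ≤ 1 → ∀ x, Y t *ᵥ x = -a • x →
      -(K * a * (x ⬝ᵥ x)) ≤ x ⬝ᵥ D t *ᵥ x)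
    {ε : ℝ} (hε : 0 < ε) (hεT : ε * Real.exp ((K + 1) * T) ≤ 1) :
    ∀ t ∈ Icc 0 T, ∀ x ∈ Metric.sphere (0 : ι → ℝ) 1,
      0 < x ⬝ᵥ Y t *ᵥ x + ε * Real.exp ((K + 1) * t) * (x ⬝ᵥ x) := by
  set f := fun t (x : ι → ℝ) => x ⬝ᵥ Y t *ᵥ x + ε * Real.exp ((K + 1) * t) * (x ⬝ᵥ x)
  have hf : ∀ t ∈ Icc 0 T, ∀ x, HasDerivAt (fun t => f t x)
      (x ⬝ᵥ D t *ᵥ x + (K + 1) * (ε * Real.exp ((K + 1) * t)) * (x ⬝ᵥ x)) t := fun t ht x =>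
    (hasDerivAt_dotProduct_mulVec (hY t ht) x).add
      ((((hasDerivAt_id' t).const_mul (K + 1)).exp.const_mul ε).mul_const _ |>.congr_deriv
        (by ring))
  by_contra! hbad
  obtain ⟨t, ht, x, hx, hfx, hbefore⟩ := exists_first_nonpos (isCompact_sphere 0 1)
    ((continuousOn_dotProduct_mulVec_self (fun t ht => (hY t ht).continuousAt.continuousWithinAt)
      _).add (Continuous.continuousOn (by fun_prop))) hbad
  have ht0 : 0 < t := by
    refine ht.1.lt_of_ne fun h => hfx.not_gt ?_
    subst h
    simpa [f] using add_pos_of_nonneg_of_pos (h0.dotProduct_mulVec_nonneg_real x)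
      (mul_pos hε (dotProduct_self_pos_of_mem_sphere hx))
  set a := ε * Real.exp ((K + 1) * t)
  have ha1 : a ≤ 1 := hεT.trans' (by unfold a; gcongr; exact ht.2)
  have hbefore' : ∀ y ∈ Metric.sphere (0 : ι → ℝ) 1, ∀ r ∈ Ioo 0 t, 0 < f r y :=
    fun y hy r hr => hbefore r ⟨hr.1.le, hr.2⟩ y hy
  have hM : (Y t + a • 1).PosSemidef :=
    posSemidef_of_forall_sphere (by simp [IsSymm, (hsymm t ht).eq]) fun y hy => by
      rw [dotProduct_add_smul_one_mulVec]
      exact (hf t ht y).continuousAt.continuousWithinAt.nonneg_of_pos_left ht0 (hbefore' y hy)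
  have hx_eig := mulVec_eq_neg_smul_of_posSemidef_add hM hfx
  have hderiv := (hf t ht x).nonpos_of_pos_left ht0 (hbefore' x hx) hfx
  nlinarith [hD t ht a (by positivity) ha1 x hx_eig, dotProduct_self_pos_of_mem_sphere hx,
    show 0 < a by positivity]

theorem posSemidef_of_hasDerivAt (hK : 0 ≤ K)
    (hY : ∀ t ∈ Icc 0 T, HasDerivAt Y (D t) t) (hsymm : ∀ t ∈ Icc 0 T, (Y t).IsSymm)
    (h0 : (Y 0).PosSemidef)
    (hD : ∀ t ∈ Icc 0 T, ∀ a, 0 < a → a ≤ 1 → ∀ x, Y t *ᵥ x = -a • x →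
      -(K * a * (x ⬝ᵥ x)) ≤ x ⬝ᵥ D t *ᵥ x) :
    ∀ t ∈ Icc 0 T, (Y t).PosSemidef := by
  intro t ht
  refine posSemidef_of_forall_sphere (hsymm t ht) fun x hx => ?_
  have hlim : Filter.Tendsto
      (fun ε => x ⬝ᵥ Y t *ᵥ x + ε * Real.exp ((K + 1) * t) * (x ⬝ᵥ x))
      (𝓝[>] 0) (𝓝 (x ⬝ᵥ Y t *ᵥ x)) :=
    (Continuous.tendsto' (by fun_prop) 0 _ (by simp)).mono_left nhdsWithin_le_nhds
  refine ge_of_tendsto hlim ?_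
  filter_upwards [Ioo_mem_nhdsGT (Real.exp_pos (-((K + 1) * T)))] with ε hε
  refine (dotProduct_mulVec_add_pos_of_hasDerivAt hK hY hsymm h0 hD hε.1 ?_ t ht x hx).le
  simpa [← Real.exp_add] using (mul_lt_mul_of_pos_right hε.2 (Real.exp_pos ((K + 1) * T))).le

end PosSemidefInvariance

end Matrix

def riccati {ι : Type*} [Fintype ι] (H S Q M : Matrix ι ι ℝ) : Matrix ι ι ℝ :=
  H * M + M * Hᵀ + Q - M * S * M

section Riccati

variable {ι : Type*} [Fintype ι] [DecidableEq ι] {H S Q : Matrix ι ι ℝ} {Y : ℝ → Matrix ι ι ℝ}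
  {T : ℝ}

omit [DecidableEq ι] in
lemma riccati_transpose (hS : S.IsSymm) (hQ : Q.IsSymm) (M : Matrix ι ι ℝ) :
    (riccati H S Q M)ᵀ = riccati H S Q Mᵀ := by
  simp only [riccati, transpose_sub, transpose_add, transpose_mul, transpose_transpose, hS.eq,
    hQ.eq, mul_assoc]
  abel

lemma exists_lipschitzOnWith_riccati (H S Q : Matrix ι ι ℝ) (R : ℝ) :
    ∃ K, LipschitzOnWith K (riccati H S Q) (Metric.closedBall 0 R) :=
  (ContDiff.locallyLipschitz (𝕂 := ℝ) (by unfold riccati; fun_prop) :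
    LocallyLipschitz (riccati H S Q)).locallyLipschitzOn.exists_lipschitzOnWith_of_compact
    (isCompact_closedBall 0 R)

theorem eqOn_of_hasDerivAt_riccati {Z : ℝ → Matrix ι ι ℝ}
    (hY : ∀ t ∈ Icc 0 T, HasDerivAt Y (riccati H S Q (Y t)) t)
    (hZ : ∀ t ∈ Icc 0 T, HasDerivAt Z (riccati H S Q (Z t)) t) (h0 : Y 0 = Z 0) :
    EqOn Y Z (Icc 0 T) := by
  have bound : ∀ {Y : ℝ → Matrix ι ι ℝ}, (∀ t ∈ Icc 0 T, HasDerivAt Y (riccati H S Q (Y t)) t) →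
      ∃ R, ∀ t ∈ Icc 0 T, ‖Y t‖ ≤ R := fun hY =>
    isCompact_Icc.exists_bound_of_continuousOn
      fun t ht => (hY t ht).continuousAt.continuousWithinAt
  obtain ⟨RY, hRY⟩ := bound hY
  obtain ⟨RZ, hRZ⟩ := bound hZ
  obtain ⟨K, hK⟩ := exists_lipschitzOnWith_riccati H S Q (max RY RZ)
  have mem : ∀ {Y : ℝ → Matrix ι ι ℝ} {R}, (∀ t ∈ Icc 0 T, ‖Y t‖ ≤ R) → R ≤ max RY RZ →
      ∀ t ∈ Ico 0 T, Y t ∈ Metric.closedBall 0 (max RY RZ) := fun hR hle t ht =>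
    mem_closedBall_zero_iff.mpr ((hR t (Ico_subset_Icc_self ht)).trans hle)
  exact ODE_solution_unique_of_mem_Icc_right (fun _ _ => hK)
    (fun t ht => (hY t ht).continuousAt.continuousWithinAt)
    (fun t ht => (hY t (Ico_subset_Icc_self ht)).hasDerivWithinAt) (mem hRY (le_max_left _ _))
    (fun t ht => (hZ t ht).continuousAt.continuousWithinAt)
    (fun t ht => (hZ t (Ico_subset_Icc_self ht)).hasDerivWithinAt) (mem hRZ (le_max_right _ _)) h0

theorem isSymm_of_hasDerivAt_riccati (hS : S.IsSymm) (hQ : Q.IsSymm)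
    (hY : ∀ t ∈ Icc 0 T, HasDerivAt Y (riccati H S Q (Y t)) t) (h0 : (Y 0).IsSymm) :
    ∀ t ∈ Icc 0 T, (Y t).IsSymm := fun _ ht =>
  (eqOn_of_hasDerivAt_riccati (Z := fun t => (Y t)ᵀ) hY
    (fun t ht => riccati_transpose hS hQ (Y t) ▸ hasDerivAt_transpose (hY t ht)) h0.symm ht).symm

lemma le_dotProduct_riccati_mulVec (hS : S.PosSemidef) (hQ : Q.PosSemidef) {M : Matrix ι ι ℝ}
    (hM : M.IsSymm) {a : ℝ} (ha : 0 < a) (ha1 : a ≤ 1) {x : ι → ℝ} (hx : M *ᵥ x = -a • x) :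
    -((2 * ‖H‖ + ‖S‖) * a * (x ⬝ᵥ x)) ≤ x ⬝ᵥ riccati H S Q M *ᵥ x := by
  have hHM : x ⬝ᵥ (H * M) *ᵥ x = -a * (x ⬝ᵥ H *ᵥ x) := by
    rw [← mulVec_mulVec, hx, mulVec_smul, dotProduct_smul, smul_eq_mul]
  have hMH : x ⬝ᵥ (M * Hᵀ) *ᵥ x = -a * (x ⬝ᵥ H *ᵥ x) := by
    rw [← hHM, ← dotProduct_transpose_mulVec (H * M) x x, transpose_mul, hM.eq]
  have hMSM : x ⬝ᵥ (M * S * M) *ᵥ x = a ^ 2 * (x ⬝ᵥ S *ᵥ x) := by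
    nth_rewrite 1 [← hM.eq]
    rw [dotProduct_transpose_mul_mul_mulVec, hx, mulVec_smul, dotProduct_smul, smul_dotProduct,
      smul_eq_mul, smul_eq_mul]
    ring
  simp only [riccati, add_mulVec, sub_mulVec, dotProduct_add, dotProduct_sub, hHM, hMH, hMSM]
  have hH := mul_le_mul_of_nonneg_left (dotProduct_mulVec_le_l2_opNorm H x) ha.le
  have hS : a ^ 2 * (x ⬝ᵥ S *ᵥ x) ≤ a * (‖S‖ * (x ⬝ᵥ x)) :=
    calc a ^ 2 * (x ⬝ᵥ S *ᵥ x) ≤ a * (x ⬝ᵥ S *ᵥ x) := by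
          gcongr
          · exact hS.dotProduct_mulVec_nonneg_real x
          · nlinarith
      _ ≤ a * (‖S‖ * (x ⬝ᵥ x)) := by gcongr; exact dotProduct_mulVec_le_l2_opNorm S x
  linarith [hQ.dotProduct_mulVec_nonneg_real x]

theorem posSemidef_of_hasDerivAt_riccati (hS : S.PosSemidef) (hQ : Q.PosSemidef)
    (hY : ∀ t ∈ Icc 0 T, HasDerivAt Y (riccati H S Q (Y t)) t) (h0 : (Y 0).PosSemidef) :
    ∀ t ∈ Icc 0 T, (Y t).PosSemidef :=
  have hsymm := isSymm_of_hasDerivAt_riccati (isHermitian_iff_isSymm.mp hS.1)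
    (isHermitian_iff_isSymm.mp hQ.1) hY (isHermitian_iff_isSymm.mp h0.1)
  posSemidef_of_hasDerivAt (by positivity) hY hsymm h0 fun t ht _ ha ha1 _ hx =>
    le_dotProduct_riccati_mulVec hS hQ (hsymm t ht) ha ha1 hx

lemma hasDerivAt_exp_conj_of_hasDerivAt_riccati {s r : ℝ}
    (hY : HasDerivAt Y (riccati H S Q (Y r)) r) :
    HasDerivAt (fun r => NormedSpace.exp ((s - r) • H) * Y r * (NormedSpace.exp ((s - r) • H))ᵀ)
      (NormedSpace.exp ((s - r) • H) * (Q - Y r * S * Y r) *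
        (NormedSpace.exp ((s - r) • H))ᵀ) r := by
  have hE := hasDerivAt_exp_sub_smul H s r
  refine ((hE.fun_mul hY).fun_mul (hasDerivAt_transpose hE)).congr_deriv ?_
  simp only [riccati, transpose_neg, transpose_mul]
  noncomm_ring

lemma dotProduct_exp_smul_conj_sub_mulVec_le {μ τ : ℝ}
    (hH : ∀ u, u ⬝ᵥ H *ᵥ u ≤ μ * (u ⬝ᵥ u)) (hτ : 0 ≤ τ) (hS : S.PosSemidef) {M : Matrix ι ι ℝ}
    (hM : M.IsSymm) (u : ι → ℝ) :
    u ⬝ᵥ (NormedSpace.exp (τ • H) * (Q - M * S * M) * (NormedSpace.exp (τ • H))ᵀ) *ᵥ u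
      ≤ Real.exp (2 * μ * τ) * ‖Q‖ * (u ⬝ᵥ u) := by
  set E := NormedSpace.exp (τ • H)
  have hMSM : E * (M * S * M) * Eᵀ = (M * Eᵀ)ᵀ * S * (M * Eᵀ) := by
    simp only [transpose_mul, transpose_transpose, hM.eq, mul_assoc]
  have hMSM_nonneg : 0 ≤ u ⬝ᵥ (E * (M * S * M) * Eᵀ) *ᵥ u := by
    rw [hMSM, dotProduct_transpose_mul_mul_mulVec]
    exact hS.dotProduct_mulVec_nonneg_real _
  rw [mul_sub, sub_mul, sub_mulVec, dotProduct_sub]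
  linarith [dotProduct_exp_smul_conj_mulVec_le hH hτ Q u]

theorem dotProduct_mulVec_le_of_hasDerivAt_riccati {μ : ℝ}
    (hH : ∀ u, u ⬝ᵥ H *ᵥ u ≤ μ * (u ⬝ᵥ u)) (hS : S.PosSemidef)
    (hY : ∀ t ∈ Icc 0 T, HasDerivAt Y (riccati H S Q (Y t)) t)
    (hsymm : ∀ t ∈ Icc 0 T, (Y t).IsSymm) {s : ℝ} (hs : s ∈ Icc 0 T) (u : ι → ℝ) :
    u ⬝ᵥ Y s *ᵥ u ≤ (Real.exp (2 * μ * s) * ‖Y 0‖ + s * phi1 (2 * μ * s) * ‖Q‖) * (u ⬝ᵥ u) := by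
  set E := fun r : ℝ => NormedSpace.exp ((s - r) • H)
  set B := fun r => Real.exp (2 * μ * s) * ‖Y 0‖ * (u ⬝ᵥ u)
    + ‖Q‖ * (u ⬝ᵥ u) * (s * phi1 (2 * μ * s) - (s - r) * phi1 (2 * μ * (s - r)))
  have hsub : Icc 0 s ⊆ Icc 0 T := Icc_subset_Icc_right hs.2
  have hφ : ∀ r ∈ Icc 0 s, HasDerivAt (fun r => u ⬝ᵥ (E r * Y r * (E r)ᵀ) *ᵥ u)
      (u ⬝ᵥ (E r * (Q - Y r * S * Y r) * (E r)ᵀ) *ᵥ u) r := fun r hr =>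
    hasDerivAt_dotProduct_mulVec (hasDerivAt_exp_conj_of_hasDerivAt_riccati (hY r (hsub hr))) u
  have hB : ∀ r, HasDerivAt B (Real.exp (2 * μ * (s - r)) * ‖Q‖ * (u ⬝ᵥ u)) r := fun r =>
    ((hasDerivAt_mul_phi1_mul (2 * μ) (s - r)).comp r ((hasDerivAt_id' r).const_sub s)
      |>.const_sub (s * phi1 (2 * μ * s)) |>.const_mul (‖Q‖ * (u ⬝ᵥ u))
      |>.const_add (Real.exp (2 * μ * s) * ‖Y 0‖ * (u ⬝ᵥ u))).congr_deriv (by ring)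
  have hφ0 : u ⬝ᵥ (E 0 * Y 0 * (E 0)ᵀ) *ᵥ u ≤ B 0 := by
    simpa [E, B] using dotProduct_exp_smul_conj_mulVec_le hH hs.1 (Y 0) u
  have := image_le_of_deriv_right_le_deriv_boundary
    (fun r hr => (hφ r hr).continuousAt.continuousWithinAt)
    (fun r hr => (hφ r (Ico_subset_Icc_self hr)).hasDerivWithinAt) hφ0
    (fun r _ => (hB r).continuousAt.continuousWithinAt) (fun r _ => (hB r).hasDerivWithinAt)
    (fun r hr => dotProduct_exp_smul_conj_sub_mulVec_le hH (sub_nonneg.mpr hr.2.le) hS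
      (hsymm r (hsub (Ico_subset_Icc_self hr))) u) ⟨hs.1, le_rfl⟩
  simpa [E, B] using this.trans_eq (by ring)

theorem norm_le_of_hasDerivAt_riccati {μ : ℝ}
    (hH : ∀ u, u ⬝ᵥ H *ᵥ u ≤ μ * (u ⬝ᵥ u)) (hS : S.PosSemidef) (hQ : Q.PosSemidef)
    (hY : ∀ t ∈ Icc 0 T, HasDerivAt Y (riccati H S Q (Y t)) t) (h0 : (Y 0).PosSemidef)
    {s : ℝ} (hs : s ∈ Icc 0 T) :
    ‖Y s‖ ≤ Real.exp (2 * μ * s) * ‖Y 0‖ + s * phi1 (2 * μ * s) * ‖Q‖ := by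
  have hsymm := isSymm_of_hasDerivAt_riccati (isHermitian_iff_isSymm.mp hS.1)
    (isHermitian_iff_isSymm.mp hQ.1) hY (isHermitian_iff_isSymm.mp h0.1)
  refine (posSemidef_of_hasDerivAt_riccati hS hQ hY h0 s hs).l2_opNorm_le ?_
    (dotProduct_mulVec_le_of_hasDerivAt_riccati hH hS hY hsymm hs)
  have := mul_phi1_mul_le (c := 2 * μ) hs.1
  simp only [zero_mul] at this
  positivity

end Riccati

theorem projected_dre_max_norm_bound_general {n p q m : ℕ} (T : ℝ)
    (A S : Matrix (Fin n) (Fin n) ℝ) (hS : S.PosSemidef)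
    (Z : Matrix (Fin n) (Fin p) ℝ) (C : Matrix (Fin n) (Fin q) ℝ)
    (V : Matrix (Fin n) (Fin m) ℝ) (hV : Vᵀ * V = 1)
    (Y : ℝ → Matrix (Fin m) (Fin m) ℝ)
    (hY : ∀ t ∈ Set.Icc (0:ℝ) T,
      HasDerivAt Y ((Vᵀ * A * V) * Y t + Y t * (Vᵀ * A * V)ᵀ + (Vᵀ * C) * (Vᵀ * C)ᵀ
        - Y t * (Vᵀ * S * V) * Y t) t)
    (hY0 : Y 0 = (Vᵀ * Z) * (Vᵀ * Z)ᵀ) :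
    ∀ t ∈ Set.Icc (0:ℝ) T, ∀ s ∈ Set.Icc (0:ℝ) t,
      ‖V * Y s * Vᵀ‖ ≤ max 1 (Real.exp (2 * t * logNorm A)) * ‖Z * Zᵀ‖
        + t * max 1 (phi1 (2 * t * logNorm A)) * ‖C * Cᵀ‖ := by
  intro t ht s hs
  have hV1 : ‖V‖ ≤ 1 := l2_opNorm_le_one_of_transpose_mul_self hV
  have hcompress : ∀ {k} (X : Matrix (Fin n) (Fin k) ℝ), ‖(Vᵀ * X) * (Vᵀ * X)ᵀ‖ ≤ ‖X * Xᵀ‖ :=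
    fun X => by
      simpa [transpose_mul, Matrix.mul_assoc] using
        l2_opNorm_mul_mul_transpose_le ((l2_opNorm_transpose V).trans_le hV1) (X * Xᵀ)
  have hY0psd : (Y 0).PosSemidef := by
    simpa [hY0] using posSemidef_self_mul_conjTranspose (Vᵀ * Z)
  have hbound := norm_le_of_hasDerivAt_riccati (dotProduct_compress_mulVec_le_logNorm A hV)
    (by simpa using hS.conjTranspose_mul_mul_same V)
    (by simpa using posSemidef_self_mul_conjTranspose (Vᵀ * C)) hY hY0psd ⟨hs.1, hs.2.trans ht.2⟩
  have hexp : Real.exp (2 * logNorm A * s) ≤ max 1 (Real.exp (2 * t * logNorm A)) := by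
    rcases le_total 0 (logNorm A) with h | h
    · exact le_max_of_le_right (Real.exp_le_exp.mpr (by nlinarith [hs.2]))
    · exact le_max_of_le_left (Real.exp_le_one_iff.mpr (by nlinarith [hs.1]))
  have hphi : s * phi1 (2 * logNorm A * s) ≤ t * max 1 (phi1 (2 * t * logNorm A)) :=
    (mul_phi1_mul_le hs.2).trans (by rw [mul_right_comm]; gcongr; exacts [ht.1, le_max_right _ _])
  calc ‖V * Y s * Vᵀ‖ ≤ ‖Y s‖ := l2_opNorm_mul_mul_transpose_le hV1 _
    _ ≤ _ := hbound
    _ ≤ _ := by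
      rw [hY0]
      gcongr
      exacts [hcompress Z, mul_nonneg ht.1 (zero_le_one.trans (le_max_left _ _)), hcompress C]

/-- Bound for the maximum of the numerical solution of the projected DRE. -/
theorem projected_dre_max_norm_bound {n p q m : ℕ} (T : ℝ) (hT : 0 ≤ T)
    (A S : Matrix (Fin n) (Fin n) ℝ) (hS : S.PosSemidef)
    (Z : Matrix (Fin n) (Fin p) ℝ) (C : Matrix (Fin n) (Fin q) ℝ)
    (V : Matrix (Fin n) (Fin m) ℝ) (hV : Vᵀ * V = 1)
    (Y : ℝ → Matrix (Fin m) (Fin m) ℝ)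
    (hY : ∀ t ∈ Set.Icc (0:ℝ) T,
      HasDerivAt Y ((Vᵀ * A * V) * Y t + Y t * (Vᵀ * A * V)ᵀ + (Vᵀ * C) * (Vᵀ * C)ᵀ
        - Y t * (Vᵀ * S * V) * Y t) t)
    (hY0 : Y 0 = (Vᵀ * Z) * (Vᵀ * Z)ᵀ) :
    ∀ t ∈ Set.Icc (0:ℝ) T, ∀ s ∈ Set.Icc (0:ℝ) t,
      ‖V * Y s * Vᵀ‖ ≤ max 1 (Real.exp (2 * t * logNorm A)) * ‖Z * Zᵀ‖
        + t * max 1 (phi1 (2 * t * logNorm A)) * ‖C * Cᵀ‖ :=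
  projected_dre_max_norm_bound_general T A S hS Z C V hV Y hY hY0
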